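/- arXiv:1607.05712 — 2 statements merged into one kernel-verified Lean document; each statement's English description precedes it below -/
import Mathlib

section
/- Let θ₁,…,θ_s ∈ ℂ all of modulus 1, let 0 < δ < 1 and δ̄ = 2δ/(1+δ). Define q̄(z) = Π_{i=1}^s (z - θ_i)/(δz - θ_i). Then for every z ∈ ℂ with |z| ≤ 1/δ̄, one has |q̄(z)| ≤ δ^{-s}. -/
/-!
For `‖θ‖ = 1` one has the identity
`‖δ z - θ‖² - δ² ‖z - θ‖² = (1 - δ) (1 + δ - 2 δ Re (z θ̄))`,
whose right-hand side is nonnegative as soon as `0 < δ ≤ 1` and `2 δ ‖z‖ ≤ 1 + δ`.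
So each factor of `q̄` has modulus at most `1 / δ` on the disc `‖z‖ ≤ 1 / δ̄`.
-/

open ComplexConjugate

namespace Complex

lemma sq_norm_ofReal_mul_sub_sub_sq_mul_norm_sub (δ : ℝ) (z : ℂ) {θ : ℂ} (hθ : ‖θ‖ = 1) :
    ‖(δ : ℂ) * z - θ‖ ^ 2 - (δ * ‖z - θ‖) ^ 2 =
      (1 - δ) * (1 + δ - 2 * δ * (z * conj θ).re) := by
  have hθ' : normSq θ = 1 := by rw [← Complex.sq_norm, hθ, one_pow]
  rw [mul_pow, Complex.sq_norm, Complex.sq_norm, normSq_sub, normSq_sub, normSq_mul,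
    normSq_ofReal, hθ', mul_assoc (δ : ℂ), re_ofReal_mul]
  ring

lemma mul_norm_sub_le_norm_ofReal_mul_sub {δ : ℝ} (h0 : 0 < δ) (h1 : δ ≤ 1) {z θ : ℂ}
    (hθ : ‖θ‖ = 1) (hz : 2 * δ * ‖z‖ ≤ 1 + δ) :
    δ * ‖z - θ‖ ≤ ‖(δ : ℂ) * z - θ‖ := by
  have hre : 2 * δ * (z * conj θ).re ≤ 1 + δ := by
    refine le_trans (mul_le_mul_of_nonneg_left ?_ (by positivity)) hz
    simpa [hθ] using re_le_norm (z * conj θ)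
  have hdiff := sq_norm_ofReal_mul_sub_sub_sq_mul_norm_sub δ z hθ
  rw [← pow_le_pow_iff_left₀ (by positivity) (norm_nonneg _) two_ne_zero]
  nlinarith [mul_nonneg (sub_nonneg.2 h1) (sub_nonneg.2 hre)]

lemma norm_div_ofReal_mul_sub_le {δ : ℝ} (h0 : 0 < δ) (h1 : δ ≤ 1) {z θ : ℂ}
    (hθ : ‖θ‖ = 1) (hz : 2 * δ * ‖z‖ ≤ 1 + δ) :
    ‖(z - θ) / ((δ : ℂ) * z - θ)‖ ≤ 1 / δ := by
  rw [norm_div]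
  refine div_le_of_le_mul₀ (norm_nonneg _) (by positivity) ?_
  rw [one_div, inv_mul_eq_div, le_div_iff₀' h0]
  exact mul_norm_sub_le_norm_ofReal_mul_sub h0 h1 hθ hz

end Complex

/-- For `θ₁,…,θ_s` of modulus 1, `0 < δ < 1`, `δ̄ = 2δ/(1+δ)`, the function
`q̄(z) = Π (z-θᵢ)/(δz-θᵢ)` satisfies `|q̄(z)| ≤ δ^{-s}` on the disc `|z| ≤ 1/δ̄`. -/
theorem stmt6 (s : ℕ) (θ : Fin s → ℂ) (hθ : ∀ i, ‖θ i‖ = 1) (δ : ℝ)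
    (h0 : 0 < δ) (h1 : δ < 1) (z : ℂ) (hz : ‖z‖ ≤ 1 / (2 * δ / (1 + δ))) :
    ‖∏ i, (z - θ i) / ((δ : ℂ) * z - θ i)‖ ≤ (1 / δ) ^ s := by
  have hz' : 2 * δ * ‖z‖ ≤ 1 + δ := by
    rwa [one_div_div, le_div_iff₀' (by positivity)] at hz
  rw [norm_prod]
  calc ∏ i, ‖(z - θ i) / ((δ : ℂ) * z - θ i)‖ ≤ ∏ _i : Fin s, 1 / δ :=
        Finset.prod_le_prod (fun _ _ => norm_nonneg _)
          fun i _ => Complex.norm_div_ofReal_mul_sub_le h0 h1.le (hθ i) hz'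
    _ = (1 / δ) ^ s := by simp
end

section
/- For integers m ≥ 0, n ≥ 1 and any ε ∈ [0, π], the sum S_{m,n}(ε) = Σ_{k=0}^{m+n} |D_m(πk/(m+n+1) − ε)| satisfies S_{m,n}(ε) ≤ 2(m+1) + (m+n+1)·(ln((m+n+1)/2) + 1), where D_m is the Dirichlet kernel D_m(x) = sin((m+1)x)/sin(x) for x ∉ πℤ and D_m(x) = m+1 otherwise. -/
open Classical

/-- The Dirichlet kernel `D_m(x) = sin((m+1)x)/sin(x)` for `x ∉ πℤ`, `D_m(x) = m+1` else. -/

noncomputable def dirich (m : ℕ) (x : ℝ) : ℝ :=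
  if ∃ l : ℤ, x = l * Real.pi then (m + 1 : ℝ)
  else Real.sin ((m + 1) * x) / Real.sin x

/-!
Since `|D_m|` is `π`-periodic, moving `ε` by `π/N` (with `N = m+n+1`) only permutes the grid,
so `ε` may be replaced by some `δ ∈ [0, π/N)` and the grid by the points `aπ/N + δ`,
`0 ≤ a < N`. The two end points are bounded by `m+1`; the `a`-th interior point lies at distance
at least `π·min(a, N-1-a)/N` from `πℤ`, so by Jordan's inequality it contributes at most
`N/(2·min(a, N-1-a))`. Each value of the minimum occurs at most twice, so the interior contributes
at most `N·H_{⌊(N-1)/2⌋} ≤ N(ln(N/2) + 1)`.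
-/

open Real Finset

lemma abs_sin_nat_mul_le (n : ℕ) (x : ℝ) : |sin (n * x)| ≤ n * |sin x| := by
  induction n with
  | zero => simp
  | succ n ih =>
    calc |sin ((n + 1 : ℕ) * x)| = |sin (n * x) * cos x + cos (n * x) * sin x| := by
          push_cast; rw [add_mul, one_mul, sin_add]
      _ ≤ |sin (n * x)| * |cos x| + |cos (n * x)| * |sin x| := by
          simpa only [abs_mul] using abs_add_le (sin (n * x) * cos x) (cos (n * x) * sin x)
      _ ≤ |sin (n * x)| * 1 + 1 * |sin x| :=
          add_le_add (mul_le_mul_of_nonneg_left (abs_cos_le_one x) (abs_nonneg _))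
            (mul_le_mul_of_nonneg_right (abs_cos_le_one _) (abs_nonneg _))
      _ ≤ (n + 1 : ℕ) * |sin x| := by push_cast; linarith

lemma Function.Periodic.sum_range_grid {α : Type*} [AddCommMonoid α] {f : ℝ → α} {c : ℝ}
    (hf : Function.Periodic f c) (N : ℕ) :
    Function.Periodic (fun δ ↦ ∑ a ∈ range N, f (a * (c / N) + δ)) (c / N) := by
  intro δ
  obtain _ | K := N
  · simp
  dsimp only
  rw [sum_range_succ, sum_range_succ' (fun a : ℕ ↦ f (a * (c / (K + 1 : ℕ)) + δ))]
  congr 1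
  · refine sum_congr rfl fun a _ ↦ ?_
    push_cast
    ring_nf
  · rw [Nat.cast_zero, zero_mul, zero_add, ← hf δ]
    congr 1
    field_simp
    push_cast
    ring

lemma sum_range_inv_min_sub_le (L : ℕ) :
    ∑ a ∈ range (L + 1), ((min a (L - a) : ℕ) : ℝ)⁻¹ ≤ 2 * harmonic (L / 2) := by
  set g : ℕ → ℝ := fun a ↦ if a ≤ L / 2 then (a : ℝ)⁻¹ else 0 with hg
  have hg0 : ∀ a, 0 ≤ g a := fun a ↦ by positivity
  have hmin : ∀ a, ((min a (L - a) : ℕ) : ℝ)⁻¹ ≤ g a + g (L - a) := by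
    intro a
    rcases le_total a (L - a) with h | h
    · have : g a = (a : ℝ)⁻¹ := if_pos (by omega)
      rw [min_eq_left h, this]
      linarith [hg0 (L - a)]
    · have : g (L - a) = ((L - a : ℕ) : ℝ)⁻¹ := if_pos (by omega)
      rw [min_eq_right h, this]
      linarith [hg0 a]
  have hreflect : ∑ a ∈ range (L + 1), g (L - a) = ∑ a ∈ range (L + 1), g a := by
    simpa using sum_range_reflect g (L + 1)
  have hharmonic : ∑ a ∈ range (L + 1), g a = harmonic (L / 2) := by
    have hfilter : {a ∈ range (L + 1) | a ≤ L / 2} = range (L / 2 + 1) := by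
      ext a; simp only [mem_filter, mem_range]; omega
    rw [hg, sum_ite, sum_const_zero, add_zero, hfilter, sum_range_succ', Nat.cast_zero, inv_zero,
      add_zero]
    simp [harmonic]
  calc _ ≤ ∑ a ∈ range (L + 1), (g a + g (L - a)) := sum_le_sum fun a _ ↦ hmin a
    _ = 2 * harmonic (L / 2) := by rw [sum_add_distrib, hreflect, hharmonic]; ring

lemma harmonic_half_le_log_add_one (L : ℕ) :
    (harmonic (L / 2) : ℝ) ≤ log ((L + 1) / 2) + 1 := by
  rcases Nat.eq_zero_or_pos (L / 2) with hM | hM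
  · rw [hM, harmonic_zero, Rat.cast_zero]
    have := one_sub_inv_le_log_of_pos (x := (L + 1) / 2) (by positivity)
    have : ((L + 1) / 2 : ℝ)⁻¹ ≤ 2 := by
      rw [inv_div, div_le_iff₀ (by positivity)]; linarith [(L.cast_nonneg : (0 : ℝ) ≤ L)]
    linarith
  · have hlog : log (L / 2 : ℕ) ≤ log ((L + 1) / 2) := by
      apply log_le_log (by positivity)
      have : ((L / 2 : ℕ) : ℝ) ≤ L / 2 := Nat.cast_div_le
      linarith
    linarith [harmonic_le_one_add_log (L / 2)]

lemma dirich_eq_ite (m : ℕ) (x : ℝ) :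
    dirich m x = if sin x = 0 then (m + 1 : ℝ) else sin ((m + 1) * x) / sin x := by
  simp only [dirich, sin_eq_zero_iff, @eq_comm _ x]

lemma abs_dirich_le (m : ℕ) (x : ℝ) : |dirich m x| ≤ m + 1 := by
  rw [dirich_eq_ite]
  split_ifs with hx
  · rw [abs_of_nonneg (by positivity)]
  · rw [abs_div, div_le_iff₀ (abs_pos.mpr hx)]
    exact_mod_cast abs_sin_nat_mul_le (m + 1) x

lemma abs_dirich_periodic (m : ℕ) : Function.Periodic (fun x ↦ |dirich m x|) π := by
  intro x
  have h := sin_add_nat_mul_pi ((m + 1) * x) (m + 1)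
  push_cast at h
  simp only [dirich_eq_ite, sin_add_pi, neg_eq_zero, mul_add, h]
  split_ifs <;> simp [abs_div, abs_mul]

lemma abs_dirich_le_pi_div_two_mul (m : ℕ) {x s : ℝ} (hs : 0 < s) (hsx : s ≤ x)
    (hsx' : s ≤ π - x) :
    |dirich m x| ≤ π / (2 * s) := by
  have hsin : 2 / π * s ≤ sin x := by
    rcases le_total x (π / 2) with hx | hx
    · exact (by gcongr : 2 / π * s ≤ 2 / π * x).trans (mul_le_sin (by linarith) hx)
    · rw [← sin_pi_sub]
      exact (by gcongr : 2 / π * s ≤ 2 / π * (π - x)).trans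
        (mul_le_sin (by linarith) (by linarith))
  have hsin_pos : 0 < sin x := lt_of_lt_of_le (by positivity) hsin
  rw [dirich_eq_ite, if_neg hsin_pos.ne', abs_div, abs_of_pos hsin_pos,
    div_le_div_iff₀ hsin_pos (by positivity)]
  calc |sin ((m + 1) * x)| * (2 * s) ≤ 1 * (2 * s) := by gcongr; exact abs_sin_le_one _
    _ = π * (2 / π * s) := by field_simp
    _ ≤ π * sin x := by gcongr

/-- At the end points `a = 0` and `a = L` the last summand is the junk value `0⁻¹ = 0`. -/
lemma abs_dirich_grid_le (m L : ℕ) {δ : ℝ} (hδ : δ ∈ Set.Ico 0 (π / (L + 1))) {a : ℕ}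
    (ha : a ≤ L) :
    |dirich m (a * (π / (L + 1)) + δ)| ≤
      (if a = 0 then (m + 1 : ℝ) else 0) + (if a = L then (m + 1 : ℝ) else 0) +
        (L + 1) / 2 * ((min a (L - a) : ℕ) : ℝ)⁻¹ := by
  obtain ⟨hδ0, hδh⟩ := hδ
  set d := π / (L + 1) with hd
  have hπ : π = (L + 1) * d := by rw [hd]; field_simp
  by_cases hend : a = 0 ∨ a = L
  · have hle := abs_dirich_le m (a * d + δ)
    refine le_add_of_le_of_nonneg ?_ (by positivity)
    rcases hend with rfl | rfl
    · rw [if_pos rfl]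
      exact le_add_of_le_of_nonneg hle (by positivity)
    · rw [if_pos rfl]
      exact le_add_of_nonneg_of_le (by positivity) hle
  push Not at hend
  rw [if_neg hend.1, if_neg hend.2, zero_add, zero_add]
  set b := min a (L - a)
  have hb1 : (1 : ℝ) ≤ b := by norm_cast; omega
  have hba : (b : ℝ) ≤ a := by norm_cast; omega
  have hbaL : (b : ℝ) + a + 1 ≤ L + 1 := by norm_cast; omega
  have hd0 : 0 < d := by positivity
  calc |dirich m (a * d + δ)| ≤ π / (2 * (b * d)) := by
        apply abs_dirich_le_pi_div_two_mul m (by positivity)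
        · nlinarith
        · nlinarith
    _ = (L + 1) / 2 * (b : ℝ)⁻¹ := by rw [hπ]; field_simp

lemma sum_abs_dirich_grid_le (m L : ℕ) {δ : ℝ} (hδ : δ ∈ Set.Ico 0 (π / (L + 1))) :
    ∑ a ∈ range (L + 1), |dirich m (a * (π / (L + 1)) + δ)| ≤
      2 * (m + 1) + (L + 1) * (log ((L + 1) / 2) + 1) := by
  calc _ ≤ ∑ a ∈ range (L + 1), ((if a = 0 then (m + 1 : ℝ) else 0) +
          (if a = L then (m + 1 : ℝ) else 0) +
            (L + 1) / 2 * ((min a (L - a) : ℕ) : ℝ)⁻¹) :=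
        sum_le_sum fun a ha ↦ abs_dirich_grid_le m L hδ (Nat.lt_succ_iff.mp (mem_range.mp ha))
    _ = 2 * (m + 1) +
          (L + 1) / 2 * ∑ a ∈ range (L + 1), ((min a (L - a) : ℕ) : ℝ)⁻¹ := by
        rw [sum_add_distrib, sum_add_distrib, sum_ite_eq', sum_ite_eq', ← mul_sum,
          if_pos (by simp), if_pos (by simp)]
        ring
    _ ≤ 2 * (m + 1) + (L + 1) / 2 * (2 * harmonic (L / 2)) := by
        gcongr; exact sum_range_inv_min_sub_le L
    _ = 2 * (m + 1) + (L + 1) * harmonic (L / 2) := by ring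
    _ ≤ 2 * (m + 1) + (L + 1) * (log ((L + 1) / 2) + 1) := by
        gcongr; exact harmonic_half_le_log_add_one L

theorem stmt11_general (m n : ℕ) (ε : ℝ) :
    ∑ k ∈ Finset.range (m + n + 1),
        |dirich m (Real.pi * k / (m + n + 1) - ε)|
      ≤ 2 * (m + 1) + (m + n + 1) * (Real.log ((m + n + 1) / 2) + 1) := by
  obtain ⟨δ, hδ, hshift⟩ :=
    ((abs_dirich_periodic m).sum_range_grid (m + n + 1)).exists_mem_Ico₀ (by positivity) (-ε)
  have hbound := sum_abs_dirich_grid_le m (m + n) (δ := δ) (by push_cast at hδ ⊢; exact hδ)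
  push_cast at hshift hbound
  calc _ = ∑ k ∈ range (m + n + 1), |dirich m (k * (π / (m + n + 1)) + -ε)| := by
        refine sum_congr rfl fun k _ ↦ ?_
        ring_nf
    _ ≤ _ := hshift ▸ hbound

/-- For `m ≥ 0`, `n ≥ 1`, `ε ∈ [0, π]`:
`S_{m,n}(ε) = Σ_{k=0}^{m+n} |D_m(πk/(m+n+1) − ε)| ≤ 2(m+1) + (m+n+1)(ln((m+n+1)/2)+1)`. -/
theorem stmt11 (m n : ℕ) (hn : 1 ≤ n) (ε : ℝ) (h0 : 0 ≤ ε) (h1 : ε ≤ Real.pi) :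
    ∑ k ∈ Finset.range (m + n + 1),
        |dirich m (Real.pi * k / (m + n + 1) - ε)|
      ≤ 2 * (m + 1) + (m + n + 1) * (Real.log ((m + n + 1) / 2) + 1) :=
  stmt11_general m n ε
end
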